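/- Let c be an acyclic edge coloring of G − e with e = ab, and let β be a candidate color for e (i.e., β appears on no edge incident to a or b). Then assigning β to e fails to be acyclic if and only if there exists a color α, appearing both at a (on an edge other than potential ab) and at b, such that there is a maximal (α,β)-bichromatic path from a to b whose first and last edges are both colored α. -/

import Mathlib

/-- A proper edge coloring: edges sharing a vertex receive different colors. -/
def ProperEdgeColoring {V C : Type*} (G : SimpleGraph V) (c : Sym2 V → C) : Prop :=
  ∀ ⦃u v w : V⦄, G.Adj u v → G.Adj u w → v ≠ w → c s(u, v) ≠ c s(u, w)

/-- An acyclic edge coloring: a proper edge coloring with no bichromatic cycle. -/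
def AcyclicEdgeColoring {V C : Type*} (G : SimpleGraph V) (c : Sym2 V → C) : Prop :=
  ProperEdgeColoring G c ∧
    ∀ (v : V) (W : G.Walk v v), W.IsCycle →
      ¬ ∃ α β : C, ∀ e ∈ W.edges, c e = α ∨ c e = β

/-- `colorsAt G c x` (the set `F_x`): colors on edges of `G` incident with `x`. -/
def colorsAt {V C : Type*} (G : SimpleGraph V) (c : Sym2 V → C) (x : V) : Set C :=
  {γ | ∃ y, G.Adj x y ∧ c s(x, y) = γ}

/-- A maximal (α,β)-bichromatic path. -/
def IsMaxBichromaticPath {V C : Type*} (G : SimpleGraph V) (c : Sym2 V → C) (α β : C)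
    {a b : V} (p : G.Walk a b) : Prop :=
  p.IsPath ∧ (∀ e ∈ p.edges, c e = α ∨ c e = β) ∧
  (∀ x, G.Adj a x → (c s(a, x) = α ∨ c s(a, x) = β) → s(a, x) ∈ p.edges) ∧
  (∀ x, G.Adj b x → (c s(b, x) = α ∨ c s(b, x) = β) → s(b, x) ∈ p.edges)

/-- An (α,β,ab)-critical path: a maximal (α,β)-bichromatic path from a to b whose
first and last edges are both colored α. -/
def IsCriticalPath {V C : Type*} (G : SimpleGraph V) (c : Sym2 V → C)
    (α β : C) (a b : V) : Prop :=
  ∃ p : G.Walk a b, IsMaxBichromaticPath G c α β p ∧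
    ∃ hne : p.edges ≠ [],
      c (p.edges.head hne) = α ∧ c (p.edges.getLast hne) = α

/-!
A bichromatic cycle created by giving `ab` the color `β` must pass through `ab`, because `c`
is acyclic on `G - ab`; removing `ab` leaves an `(α, β)`-path from `a` to `b` in `G - ab`.
As `β` is missing at `a` and `b`, both end edges of that path carry the other color `α`, and
properness of `c` makes the path maximal at both ends. Conversely, an `(α, β)`-path from `a`
to `b` closes up with `ab` into an `(α, β)`-cycle.
-/

section

open SimpleGraph

variable {V C : Type*}

namespace SimpleGraph.Walk

variable {G : SimpleGraph V}

theorem notMem_of_mem_edges_deleteEdges {s : Set (Sym2 V)} {u v : V} {e : Sym2 V}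
    (p : (G.deleteEdges s).Walk u v) (he : e ∈ p.edges) : e ∉ s :=
  (edgeSet_deleteEdges s ▸ p.edges_subset_edgeSet he).2

theorem exists_isPath_deleteEdges_of_isCycle {u a b : V} {W : G.Walk u u} (hW : W.IsCycle)
    (hab : s(a, b) ∈ W.edges) :
    ∃ p : (G.deleteEdges {s(a, b)}).Walk a b, p.IsPath ∧ ∀ e ∈ p.edges, e ∈ W.edges := by
  -- inside the graph formed by the edges of `W`, the edge `ab` lies on a cycle, hence is no bridge
  set H := G.deleteEdges {e | e ∉ W.edges}
  let W' : H.Walk u u := W.toDeleteEdges _ fun _ he h ↦ h he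
  obtain ⟨-, hreach⟩ := (adj_and_reachable_delete_edges_iff_exists_cycle (v := a) (w := b)).mpr
    ⟨u, W', hW.transfer _, by rwa [edges_transfer]⟩
  obtain ⟨q, hq⟩ := hreach.exists_isPath
  refine ⟨q.mapLe (deleteEdges_mono (G.deleteEdges_le _)), hq.mapLe _, fun e he ↦ ?_⟩
  rw [edges_mapLe_eq_edges] at he
  have heH : e ∈ H.edgeSet := edgeSet_mono (H.deleteEdges_le _) (q.edges_subset_edgeSet he)
  exact not_not.mp (edgeSet_deleteEdges _ ▸ heH : e ∈ G.edgeSet \ _).2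

end SimpleGraph.Walk

variable {G : SimpleGraph V} {c : Sym2 V → C} {α β : C} {a b : V}

theorem ProperEdgeColoring.update [DecidableEq V]
    (hc : ProperEdgeColoring (G.deleteEdges {s(a, b)}) c)
    (ha : β ∉ colorsAt (G.deleteEdges {s(a, b)}) c a)
    (hb : β ∉ colorsAt (G.deleteEdges {s(a, b)}) c b) :
    ProperEdgeColoring G (Function.update c s(a, b) β) := by
  have hadj {u w : V} (huw : G.Adj u w) (hne : s(u, w) ≠ s(a, b)) :
      (G.deleteEdges {s(a, b)}).Adj u w :=
    deleteEdges_adj.mpr ⟨huw, hne⟩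
  have hβ {u v w : V} (huw : G.Adj u w) (hv : s(u, v) = s(a, b)) (hw : s(u, w) ≠ s(a, b)) :
      c s(u, w) ≠ β := by
    rcases Sym2.eq_iff.mp hv with ⟨rfl, -⟩ | ⟨rfl, -⟩
    exacts [fun h ↦ ha ⟨w, hadj huw hw, h⟩, fun h ↦ hb ⟨w, hadj huw hw, h⟩]
  intro u v w huv huw hvw
  by_cases hv : s(u, v) = s(a, b) <;> by_cases hw : s(u, w) = s(a, b)
  · exact absurd (Sym2.congr_right.mp (hv.trans hw.symm)) hvw
  · simpa [hv, Function.update_of_ne hw] using (hβ huw hv hw).symm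
  · simpa [hw, Function.update_of_ne hv] using hβ huv hw hv
  · simpa [Function.update_of_ne hv, Function.update_of_ne hw] using
      hc (hadj huv hv) (hadj huw hw) hvw

theorem color_start_snd_eq {p : G.Walk a b} (hp : ¬p.Nil) (hβ : β ∉ colorsAt G c a)
    (hcol : ∀ e ∈ p.edges, c e = α ∨ c e = β) : c s(a, p.snd) = α :=
  (hcol _ (p.mk_start_snd_mem_edges hp)).resolve_right fun h ↦ hβ ⟨_, p.adj_snd hp, h⟩

theorem mem_edges_of_adj_start (hc : ProperEdgeColoring G c) {p : G.Walk a b} (hp : ¬p.Nil)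
    (hβ : β ∉ colorsAt G c a) (hcol : ∀ e ∈ p.edges, c e = α ∨ c e = β) {x : V}
    (hx : G.Adj a x) (hxc : c s(a, x) = α ∨ c s(a, x) = β) : s(a, x) ∈ p.edges := by
  obtain hxα | hxβ := hxc
  · obtain rfl : x = p.snd := by
      by_contra hne
      exact hc hx (p.adj_snd hp) hne (hxα.trans (color_start_snd_eq hp hβ hcol).symm)
    exact p.mk_start_snd_mem_edges hp
  · exact absurd ⟨x, hx, hxβ⟩ hβ

theorem isCriticalPath_of_isPath (hc : ProperEdgeColoring G c) (hab : a ≠ b)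
    (ha : β ∉ colorsAt G c a) (hb : β ∉ colorsAt G c b) {p : G.Walk a b} (hp : p.IsPath)
    (hcol : ∀ e ∈ p.edges, c e = α ∨ c e = β) :
    α ∈ colorsAt G c a ∧ α ∈ colorsAt G c b ∧ IsCriticalPath G c α β a b := by
  have hnil : ¬p.Nil := Walk.not_nil_of_ne hab
  have hnil' : ¬p.reverse.Nil := Walk.nil_reverse.not.mpr hnil
  have hcol' : ∀ e ∈ p.reverse.edges, c e = α ∨ c e = β := by simpa using hcol
  have hstart := color_start_snd_eq hnil ha hcol
  have hend := color_start_snd_eq hnil' hb hcol'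
  refine ⟨⟨_, p.adj_snd hnil, hstart⟩, ⟨_, p.reverse.adj_snd hnil', hend⟩, p,
    ⟨hp, hcol, fun x hx hxc ↦ mem_edges_of_adj_start hc hnil ha hcol hx hxc,
      fun x hx hxc ↦ by simpa using mem_edges_of_adj_start hc hnil' hb hcol' hx hxc⟩,
    Walk.edges_eq_nil.not.mpr hnil, by simpa using hstart, ?_⟩
  rw [Walk.snd_reverse, Sym2.eq_swap] at hend
  simpa using hend

theorem exists_isPath_of_not_acyclicEdgeColoring_update [DecidableEq V]
    (hc : AcyclicEdgeColoring (G.deleteEdges {s(a, b)}) c)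
    (ha : β ∉ colorsAt (G.deleteEdges {s(a, b)}) c a)
    (hb : β ∉ colorsAt (G.deleteEdges {s(a, b)}) c b)
    (h : ¬AcyclicEdgeColoring G (Function.update c s(a, b) β)) :
    ∃ α, ∃ p : (G.deleteEdges {s(a, b)}).Walk a b, p.IsPath ∧
      ∀ e ∈ p.edges, c e = α ∨ c e = β := by
  obtain ⟨u, W, hW, α₁, α₂, hcol⟩ : ∃ u, ∃ W : G.Walk u u, W.IsCycle ∧ ∃ α₁ α₂,
      ∀ e ∈ W.edges,
        Function.update c s(a, b) β e = α₁ ∨ Function.update c s(a, b) β e = α₂ := by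
    by_contra hno
    exact h ⟨hc.1.update ha hb, fun u W hW hbi ↦ hno ⟨u, W, hW, hbi⟩⟩
  have hcol' (e) (he : e ∈ W.edges) (hne : e ≠ s(a, b)) : c e = α₁ ∨ c e = α₂ := by
    simpa [Function.update_of_ne hne] using hcol e he
  by_cases habW : s(a, b) ∈ W.edges
  · obtain ⟨p, hp, hpW⟩ := W.exists_isPath_deleteEdges_of_isCycle hW habW
    have hcolp (e) (he : e ∈ p.edges) : c e = α₁ ∨ c e = α₂ :=
      hcol' e (hpW e he) (p.notMem_of_mem_edges_deleteEdges he)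
    obtain rfl | rfl : β = α₁ ∨ β = α₂ := by simpa using hcol _ habW
    exacts [⟨α₂, p, hp, fun e he ↦ (hcolp e he).symm⟩, ⟨α₁, p, hp, hcolp⟩]
  · have hWab (e) (he : e ∈ W.edges) : e ∉ ({s(a, b)} : Set (Sym2 V)) :=
      fun h ↦ habW (Set.mem_singleton_iff.mp h ▸ he)
    exact (hc.2 u (W.toDeleteEdges _ hWab) (hW.transfer _) ⟨α₁, α₂, fun e he ↦ by
      rw [Walk.edges_transfer] at he; exact hcol' e he (hWab e he)⟩).elim

theorem not_acyclicEdgeColoring_update_of_isPath [DecidableEq V] (hab : G.Adj a b)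
    {p : (G.deleteEdges {s(a, b)}).Walk a b} (hp : p.IsPath)
    (hcol : ∀ e ∈ p.edges, c e = α ∨ c e = β) :
    ¬AcyclicEdgeColoring G (Function.update c s(a, b) β) := by
  rintro ⟨-, hacyc⟩
  have hpab : s(a, b) ∉ p.edges := fun h ↦ p.notMem_of_mem_edges_deleteEdges h rfl
  let q : G.Walk a b := p.mapLe (G.deleteEdges_le _)
  have hq : (Walk.cons hab q.reverse).IsCycle :=
    (Walk.cons_isCycle_iff _ hab).mpr
      ⟨(hp.mapLe _).reverse, by simpa [q, Walk.edges_mapLe_eq_edges]⟩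
  refine hacyc a _ hq ⟨α, β, ?_⟩
  simp only [Walk.edges_cons, Walk.edges_reverse, q, Walk.edges_mapLe_eq_edges, List.mem_cons,
    List.mem_reverse]
  rintro e (rfl | he)
  · simp
  · rw [Function.update_of_ne (ne_of_mem_of_not_mem he hpab)]
    exact hcol e he

end

/-- Critical-path characterization: a candidate color β for the edge ab fails to
give an acyclic extension iff there is a color α appearing at both a and b such
that there is an (α,β,ab)-critical path. -/
theorem candidate_not_valid_iff_critical_path
    {V C : Type*} [DecidableEq V] (G : SimpleGraph V) (a b : V) (hab : G.Adj a b)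
    (c : Sym2 V → C)
    (hc : AcyclicEdgeColoring (G.deleteEdges {s(a, b)}) c)
    (β : C)
    (hβ : β ∉ colorsAt (G.deleteEdges {s(a, b)}) c a ∪
          colorsAt (G.deleteEdges {s(a, b)}) c b) :
    ¬ AcyclicEdgeColoring G (Function.update c s(a, b) β) ↔
      ∃ α : C, α ∈ colorsAt (G.deleteEdges {s(a, b)}) c a ∧
        α ∈ colorsAt (G.deleteEdges {s(a, b)}) c b ∧
        IsCriticalPath (G.deleteEdges {s(a, b)}) c α β a b := by
  have ha : β ∉ colorsAt (G.deleteEdges {s(a, b)}) c a := fun h ↦ hβ (Or.inl h)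
  have hb : β ∉ colorsAt (G.deleteEdges {s(a, b)}) c b := fun h ↦ hβ (Or.inr h)
  constructor
  · intro h
    obtain ⟨α, p, hp, hcol⟩ := exists_isPath_of_not_acyclicEdgeColoring_update hc ha hb h
    exact ⟨α, isCriticalPath_of_isPath hc.1 hab.ne ha hb hp hcol⟩
  · rintro ⟨α, -, -, p, ⟨hp, hcol, -⟩, -⟩
    exact not_acyclicEdgeColoring_update_of_isPath hab hp hcol
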